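/- In two-way r-bootstrap percolation on the d-dimensional torus (2 ≤ r ≤ d), the even-part of an r-dimensional hyper-square is a b-eternal set: if all nodes of the even-part are black in some configuration C_t, then in every subsequent configuration at least one node is black. More precisely, for all t' ≥ 0, the even-part is fully black in configuration C_{t+2t'} and the odd-part is fully black in configuration C_{t+2t'+1}. -/

import Mathlib

open scoped Classical ENNReal
open MeasureTheory Filter

/-- Vertices of the `d`-dimensional torus with side length `L`. -/
abbrev TorusV (d L : ℕ) := Fin d → ZMod L

/-- The `d`-dimensional torus graph `T_L^d`: two nodes are adjacent iff they differ
by `±1 (mod L)` in exactly one coordinate. -/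
def torusGraph (d L : ℕ) : SimpleGraph (TorusV d L) where
  Adj v u := v ≠ u ∧ ∃ j, (u j = v j + 1 ∨ u j = v j - 1) ∧ ∀ k, k ≠ j → u k = v k
  symm := ⟨by
    rintro v u ⟨hne, j, hj, hk⟩
    refine ⟨hne.symm, j, ?_, fun k hkj => (hk k hkj).symm⟩
    rcases hj with h | h
    · right; rw [h]; ring
    · left; rw [h]; ring⟩
  loopless := ⟨by rintro v ⟨hne, -⟩; exact hne rfl⟩

/-- One round of two-way `r`-bootstrap percolation on a finite graph:
a node is black in the next round iff it has at least `r` black neighbors. -/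
noncomputable def gStep {V : Type*} [Fintype V] (G : SimpleGraph V) (r : ℕ)
    (C : V → Bool) : V → Bool :=
  fun v => decide (r ≤ (Finset.univ.filter (fun u => G.Adj v u ∧ C u = true)).card)

/-- One round of (ordinary) `r`-bootstrap percolation: black nodes stay black, and a white
node becomes black iff it has at least `r` black neighbors. -/
noncomputable def bpStep {V : Type*} [Fintype V] (G : SimpleGraph V) (r : ℕ)
    (C : V → Bool) : V → Bool :=
  fun v => C v || decide (r ≤ (Finset.univ.filter (fun u => G.Adj v u ∧ C u = true)).card)

/-- One round of the majority model: each node adopts the most frequent color among its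
neighbors, keeping its own color in case of a tie. -/
noncomputable def majStep {V : Type*} [Fintype V] (G : SimpleGraph V)
    (C : V → Bool) : V → Bool :=
  fun v =>
    let b := (Finset.univ.filter (fun u => G.Adj v u ∧ C u = true)).card
    let w := (Finset.univ.filter (fun u => G.Adj v u ∧ C u = false)).card
    if w < b then true else if b < w then false else C v

/-- `S` is an `(r,c)`-robust set in two-way `r`-BP: whenever all nodes of `S` have color `c`,
they keep color `c` in all subsequent configurations. (`true` = black, `false` = white.) -/
noncomputable def isRobust {V : Type*} [Fintype V] (G : SimpleGraph V) (r : ℕ) (c : Bool)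
    (S : Finset V) : Prop :=
  ∀ C : V → Bool, (∀ v ∈ S, C v = c) → ∀ t, ∀ v ∈ S, (gStep G r)^[t] C v = c

/-- `S` is a b-eternal set in two-way `r`-BP: whenever all nodes of `S` are black, every
subsequent configuration contains at least one black node. -/
noncomputable def isBEternal {V : Type*} [Fintype V] (G : SimpleGraph V) (r : ℕ)
    (S : Finset V) : Prop :=
  ∀ C : V → Bool, (∀ v ∈ S, C v = true) → ∀ t, ∃ v, (gStep G r)^[t] C v = true

/-- The node of a hyper-square at start `i` obtained by incrementing the coordinates in `S`. -/
def hsNode {d L : ℕ} (i : TorusV d L) (S : Finset (Fin d)) : TorusV d L :=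
  fun j => if j ∈ S then i j + 1 else i j

/-- The hyper-square with starting node `i` and coordinate set `J` (an `J.card`-dimensional
hyper-square). -/
noncomputable def hyperSquare {d L : ℕ} (i : TorusV d L) (J : Finset (Fin d)) :
    Finset (TorusV d L) :=
  J.powerset.image (hsNode i)

/-- The even-part of the hyper-square: nodes differing from the start in an even number of
coordinates. -/
noncomputable def evenPart {d L : ℕ} (i : TorusV d L) (J : Finset (Fin d)) :
    Finset (TorusV d L) :=
  (J.powerset.filter (fun S => Even S.card)).image (hsNode i)

/-- The odd-part of the hyper-square: nodes differing from the start in an odd number of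
coordinates. -/
noncomputable def oddPart {d L : ℕ} (i : TorusV d L) (J : Finset (Fin d)) :
    Finset (TorusV d L) :=
  (J.powerset.filter (fun S => Odd S.card)).image (hsNode i)

/-- The hyper-rectangle of size `l 0 × ⋯ × l (d-1)` starting at node `i`. -/
noncomputable def hyperRect {d L : ℕ} [NeZero L] (i : TorusV d L) (l : Fin d → ℕ) :
    Finset (TorusV d L) :=
  Finset.univ.filter (fun v => ∀ j, ∃ m : ℕ, m ≤ l j ∧ v j = i j + (m : ZMod L))

/-- The parity of a hyper-square of the tiling: parity of the sum of the last `d - r`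
coordinates of its starting node. -/
def tpar (d L r : ℕ) (i : TorusV d L) : ℕ :=
  (∑ j ∈ Finset.univ.filter (fun j : Fin d => r ≤ (j : ℕ)), (i j).val) % 2

/-- A hyper-square of the tiling (start `i`, coordinate set = first `r` coordinates) is
occupied: its even-part is fully black if its parity is even, and its odd-part is fully
black if its parity is odd. -/
noncomputable def occupiedHS (d L r : ℕ) (i : TorusV d L) (C : TorusV d L → Bool) : Prop :=
  if tpar d L r i = 0 then
    ∀ v ∈ evenPart i (Finset.univ.filter (fun j : Fin d => (j : ℕ) < r)), C v = true
  else
    ∀ v ∈ oddPart i (Finset.univ.filter (fun j : Fin d => (j : ℕ) < r)), C v = true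

/-- The Bernoulli measure on `Bool` with success (black) probability `p` (clamped to `1`). -/
noncomputable def bernoulliMeasure (p : ℝ≥0∞) : Measure Bool :=
  (PMF.ofFintype (fun b => cond b (min p 1) (1 - min p 1))
    (by rw [Fintype.sum_bool]; exact add_tsub_cancel_of_le (min_le_right _ _))).toMeasure

/-- The product measure on configurations: each node is independently black with
probability `p`. -/
noncomputable def productMeasure (V : Type*) [Fintype V] (p : ℝ≥0∞) :
    Measure (V → Bool) :=
  Measure.pi (fun _ : V => bernoulliMeasure p)

/-
Write the nodes of the hyper-square as `hsNode i S` with `S ⊆ J`. For each `j ∈ J`,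
toggling `j` in `S` gives a neighbour of `hsNode i S` of the opposite parity, so every node of
the hyper-square has `|J| = r` neighbours in the part of the other parity. Hence a fully black
even-part makes the odd-part fully black one round later and vice versa, and the two parts
alternate being black forever.
-/

open scoped symmDiff

lemma gStep_eq_true_of_injOn {V ι : Type*} [Fintype V] {G : SimpleGraph V} {r : ℕ}
    {C : V → Bool} {v : V} (s : Finset ι) (f : ι → V) (hf : Set.InjOn f s)
    (hblack : ∀ x ∈ s, G.Adj v (f x) ∧ C (f x) = true) (hr : r ≤ s.card) :
    gStep G r C v = true := by
  refine decide_eq_true (hr.trans (Finset.card_le_card_of_injOn f (fun x hx => ?_) hf))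
  simpa using hblack x hx

lemma Finset.even_card_symmDiff_singleton_iff {α : Type*} [DecidableEq α] (s : Finset α)
    (a : α) : Even (s ∆ {a}).card ↔ ¬Even s.card := by
  by_cases ha : a ∈ s
  · have hs : s ∆ {a} = s.erase a := by
      ext; simp only [mem_symmDiff, mem_singleton, mem_erase]; grind
    have := Finset.card_pos.mpr ⟨a, ha⟩
    rw [hs, Finset.card_erase_of_mem ha, Nat.even_sub (by omega)]
    simp
  · have hs : s ∆ {a} = insert a s := by
      ext; simp only [mem_symmDiff, mem_singleton, mem_insert]; grind
    rw [hs, Finset.card_insert_of_notMem ha, Nat.even_add_one]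

section HyperSquare

variable {d L : ℕ}

lemma hsNode_injective [Fact (1 < L)] (i : TorusV d L) : Function.Injective (hsNode i) := by
  intro S T h
  ext j
  have hj := congrFun h j
  simp only [hsNode] at hj
  by_cases hS : j ∈ S <;> by_cases hT : j ∈ T <;> simp_all

lemma torusGraph_adj_hsNode_symmDiff [Fact (1 < L)] (i : TorusV d L) (S : Finset (Fin d))
    (j : Fin d) : (torusGraph d L).Adj (hsNode i S) (hsNode i (S ∆ {j})) := by
  refine ⟨fun h => ?_, j, ?_, fun k hk => ?_⟩
  · have := hsNode_injective i h
    simp [eq_comm (a := S), symmDiff_eq_left] at this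
  · by_cases hj : j ∈ S <;> simp [hsNode, Finset.mem_symmDiff, hj]
  · simp [hsNode, Finset.mem_symmDiff, hk]

lemma mem_evenPart {i : TorusV d L} {J : Finset (Fin d)} {v : TorusV d L} :
    v ∈ evenPart i J ↔ ∃ S ⊆ J, Even S.card ∧ hsNode i S = v := by
  simp [evenPart, and_assoc]

lemma mem_oddPart {i : TorusV d L} {J : Finset (Fin d)} {v : TorusV d L} :
    v ∈ oddPart i J ↔ ∃ S ⊆ J, ¬Even S.card ∧ hsNode i S = v := by
  simp [oddPart, and_assoc]

variable [NeZero L] [Fact (1 < L)] {i : TorusV d L} {J : Finset (Fin d)}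
  {C : TorusV d L → Bool}

lemma gStep_hsNode_eq_true {S : Finset (Fin d)}
    (hC : ∀ j ∈ J, C (hsNode i (S ∆ {j})) = true) :
    gStep (torusGraph d L) J.card C (hsNode i S) = true := by
  refine gStep_eq_true_of_injOn J (fun j => hsNode i (S ∆ {j})) ?_
    (fun j hj => ⟨torusGraph_adj_hsNode_symmDiff i S j, hC j hj⟩) le_rfl
  exact ((hsNode_injective i).comp
    ((symmDiff_right_injective S).comp Finset.singleton_injective)).injOn

lemma gStep_hsNode_eq_true_of_opposite_parity {S : Finset (Fin d)} (hS : S ⊆ J)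
    (hC : ∀ T ⊆ J, (Even T.card ↔ ¬Even S.card) → C (hsNode i T) = true) :
    gStep (torusGraph d L) J.card C (hsNode i S) = true :=
  gStep_hsNode_eq_true fun j hj =>
    hC _ (symmDiff_le_sup.trans (Finset.union_subset hS (Finset.singleton_subset_iff.mpr hj)))
      (Finset.even_card_symmDiff_singleton_iff S j)

lemma gStep_oddPart_eq_true (hC : ∀ v ∈ evenPart i J, C v = true) :
    ∀ v ∈ oddPart i J, gStep (torusGraph d L) J.card C v = true := by
  rintro _ hv
  obtain ⟨S, hS, hodd, rfl⟩ := mem_oddPart.mp hv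
  exact gStep_hsNode_eq_true_of_opposite_parity hS fun T hT hpar =>
    hC _ (mem_evenPart.mpr ⟨T, hT, hpar.mpr hodd, rfl⟩)

lemma gStep_evenPart_eq_true (hC : ∀ v ∈ oddPart i J, C v = true) :
    ∀ v ∈ evenPart i J, gStep (torusGraph d L) J.card C v = true := by
  rintro _ hv
  obtain ⟨S, hS, heven, rfl⟩ := mem_evenPart.mp hv
  exact gStep_hsNode_eq_true_of_opposite_parity hS fun T hT hpar =>
    hC _ (mem_oddPart.mpr ⟨T, hT, fun h => hpar.mp h heven, rfl⟩)

theorem iterate_gStep_evenPart_oddPart (hC : ∀ v ∈ evenPart i J, C v = true) (t : ℕ) :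
    (∀ v ∈ evenPart i J, (gStep (torusGraph d L) J.card)^[2 * t] C v = true) ∧
      (∀ v ∈ oddPart i J, (gStep (torusGraph d L) J.card)^[2 * t + 1] C v = true) := by
  induction t with
  | zero => exact ⟨hC, gStep_oddPart_eq_true hC⟩
  | succ t ih =>
    have heven :
        ∀ v ∈ evenPart i J, (gStep (torusGraph d L) J.card)^[2 * (t + 1)] C v = true := by
      rw [mul_add, mul_one, Function.iterate_succ']
      exact gStep_evenPart_eq_true ih.2
    refine ⟨heven, ?_⟩
    rw [Function.iterate_succ']
    exact gStep_oddPart_eq_true heven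

end HyperSquare

theorem stmt_1_general (d L r : ℕ) [NeZero L] (hL : 4 ≤ L) (hr : 2 ≤ r)
    (i : TorusV d L) (J : Finset (Fin d)) (hJ : J.card = r)
    (C : TorusV d L → Bool) (hC : ∀ v ∈ evenPart i J, C v = true) :
    (∀ t, ∃ v, (gStep (torusGraph d L) r)^[t] C v = true) ∧
    (∀ t' : ℕ,
      (∀ v ∈ evenPart i J, (gStep (torusGraph d L) r)^[2 * t'] C v = true) ∧
      (∀ v ∈ oddPart i J, (gStep (torusGraph d L) r)^[2 * t' + 1] C v = true)) := by
  have : Fact (1 < L) := ⟨by omega⟩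
  subst hJ
  have hparts := iterate_gStep_evenPart_oddPart hC
  refine ⟨fun t => ?_, hparts⟩
  obtain ⟨j, hj⟩ : J.Nonempty := Finset.card_pos.mp (by omega)
  obtain ⟨t', rfl | rfl⟩ := Nat.even_or_odd' t
  · exact ⟨_, (hparts t').1 _
      (mem_evenPart.mpr ⟨∅, Finset.empty_subset J, by simp, rfl⟩)⟩
  · exact ⟨_, (hparts t').2 _
      (mem_oddPart.mpr ⟨{j}, Finset.singleton_subset_iff.mpr hj, by simp, rfl⟩)⟩

theorem stmt_1 (d L r : ℕ) [NeZero L] (hL : 4 ≤ L) (hr : 2 ≤ r) (hrd : r ≤ d)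
    (i : TorusV d L) (J : Finset (Fin d)) (hJ : J.card = r)
    (C : TorusV d L → Bool) (hC : ∀ v ∈ evenPart i J, C v = true) :
    (∀ t, ∃ v, (gStep (torusGraph d L) r)^[t] C v = true) ∧
    (∀ t' : ℕ,
      (∀ v ∈ evenPart i J, (gStep (torusGraph d L) r)^[2 * t'] C v = true) ∧
      (∀ v ∈ oddPart i J, (gStep (torusGraph d L) r)^[2 * t' + 1] C v = true)) :=
  stmt_1_general d L r hL hr i J hJ C hC
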